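/- arXiv:1501.01123 — 2 statements merged into one kernel-verified Lean document; each statement's English description precedes it below -/
import Mathlib

section
/- For every smooth 1-form θ on M, every smooth vector field W, and all smooth vector fields X,Y,Z, dΨ_{θ,W}(X,Y,Z) = Σ_cyc (∇_X θ)(R(Y,Z)W) + Σ_cyc θ(R(Y,Z)(∇_X W)), where each Σ_cyc denotes the sum over the cyclic permutations (X,Y,Z), (Y,Z,X), (Z,X,Y). -/
/-!
Write `α := θ(∇W)`, i.e. `α(A) = θ(∇_A W)`. Expanding the definitions gives
`Ψ_{θ,W} = θ(R(·,·)W) − dα`, so `dΨ_{θ,W} = d(θ(R(·,·)W))` by `d² = 0`. Expanding the latter with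
`X(θ V) = (∇_X θ)(V) + θ(∇_X V)` leaves `θ` applied to `Σ_cyc (∇_X(R(Y,Z)W) − R([X,Y],Z)W)`, which
the operator form of the second Bianchi identity turns into `Σ_cyc R(Y,Z)(∇_X W)`.
-/

open scoped Manifold

local notation "∞" => (⊤ : ℕ∞)

noncomputable section

variable {E : Type*} [NormedAddCommGroup E] [NormedSpace ℝ E]
  {H : Type*} [TopologicalSpace H]

/-- A linear connection on the smooth manifold `M`, given as an operator on global smooth
vector fields (realised as derivations of the algebra `C^∞(M)` of smooth real-valued
functions) which is ℝ-bilinear, `C^∞(M)`-linear in its first argument and satisfies the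
Leibniz rule `∇_X (f • Y) = X f • Y + f • ∇_X Y` in its second argument. -/
structure LinearConnection (I : ModelWithCorners ℝ E H) (M : Type*) [TopologicalSpace M]
    [ChartedSpace H M] [IsManifold I (⊤ : ℕ∞) M] where
  cov : Derivation ℝ C^∞⟮I, M; ℝ⟯ C^∞⟮I, M; ℝ⟯ →
        Derivation ℝ C^∞⟮I, M; ℝ⟯ C^∞⟮I, M; ℝ⟯ →
        Derivation ℝ C^∞⟮I, M; ℝ⟯ C^∞⟮I, M; ℝ⟯
  add_left : ∀ X X' Y, cov (X + X') Y = cov X Y + cov X' Y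
  smul_real_left : ∀ (r : ℝ) (X Y), cov (r • X) Y = r • cov X Y
  smul_smooth_left : ∀ (f : C^∞⟮I, M; ℝ⟯) (X Y), cov (f • X) Y = f • cov X Y
  add_right : ∀ X Y Y', cov X (Y + Y') = cov X Y + cov X Y'
  smul_real_right : ∀ (r : ℝ) (X Y), cov X (r • Y) = r • cov X Y
  leibniz : ∀ (f : C^∞⟮I, M; ℝ⟯) (X Y), cov X (f • Y) = X f • Y + f • cov X Y

variable {I : ModelWithCorners ℝ E H}
  {M : Type*} [TopologicalSpace M] [ChartedSpace H M] [IsManifold I (⊤ : ℕ∞) M]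

/-- Smooth real-valued functions on `M`. -/
local notation "Cinf" => C^∞⟮I, M; ℝ⟯
/-- Smooth global vector fields on `M`, as derivations of `C^∞(M)`. -/
local notation "VF" => Derivation ℝ C^∞⟮I, M; ℝ⟯ C^∞⟮I, M; ℝ⟯

namespace LinearConnection

variable (nab : LinearConnection I M)

/-- The torsion `T(X,Y) := ∇_X Y − ∇_Y X − [X,Y]` of a linear connection. -/
def torsion (X Y : VF) : VF := nab.cov X Y - nab.cov Y X - ⁅X, Y⁆

/-- The curvature `R(X,Y)Z := ∇_X ∇_Y Z − ∇_Y ∇_X Z − ∇_{[X,Y]} Z` of a linear connection. -/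
def curv (X Y Z : VF) : VF :=
  nab.cov X (nab.cov Y Z) - nab.cov Y (nab.cov X Z) - nab.cov ⁅X, Y⁆ Z

/-- The covariant derivative along `X` of a scalar-valued map of one vector field
argument (e.g. a 1-form): `(∇_X θ)(Y) := X(θ(Y)) − θ(∇_X Y)`. -/
def covOne (X : VF) (θ : VF → Cinf) : VF → Cinf :=
  fun Y => X (θ Y) - θ (nab.cov X Y)

/-- The covariant derivative `(∇_X T)(Y,Z) := ∇_X(T(Y,Z)) − T(∇_X Y, Z) − T(Y, ∇_X Z)`
of the torsion. -/
def covTorsion (X Y Z : VF) : VF :=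
  nab.cov X (nab.torsion Y Z) - nab.torsion (nab.cov X Y) Z - nab.torsion Y (nab.cov X Z)

/-- The covariant derivative
`(∇_X R)(Y,Z)W := ∇_X(R(Y,Z)W) − R(∇_X Y,Z)W − R(Y,∇_X Z)W − R(Y,Z)(∇_X W)`
of the curvature. -/
def covCurv (X Y Z W : VF) : VF :=
  nab.cov X (nab.curv Y Z W) - nab.curv (nab.cov X Y) Z W - nab.curv Y (nab.cov X Z) W
    - nab.curv Y Z (nab.cov X W)

end LinearConnection

/-- The exterior derivative of a 1-form (given as a bare function on vector fields):
`dα(X,Y) := X(α(Y)) − Y(α(X)) − α([X,Y])`. -/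
def extD1 (α : VF → Cinf) (X Y : VF) : Cinf :=
  X (α Y) - Y (α X) - α ⁅X, Y⁆

/-- The exterior derivative of a 2-form (given as a bare function on vector fields):
`dβ(X,Y,Z) := X(β(Y,Z)) + Y(β(Z,X)) + Z(β(X,Y)) − β([X,Y],Z) − β([Y,Z],X) − β([Z,X],Y)`. -/
def extD2 (β : VF → VF → Cinf) (X Y Z : VF) : Cinf :=
  X (β Y Z) + Y (β Z X) + Z (β X Y) - β ⁅X, Y⁆ Z - β ⁅Y, Z⁆ X - β ⁅Z, X⁆ Y

lemma lie_lie_cyclic_sum {L : Type*} [LieRing L] (x y z : L) :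
    ⁅⁅x, y⁆, z⁆ + ⁅⁅y, z⁆, x⁆ + ⁅⁅z, x⁆, y⁆ = 0 := by
  rw [← lie_skew, ← lie_skew ⁅y, z⁆, ← lie_skew ⁅z, x⁆, ← neg_add, ← neg_add, neg_eq_zero,
    add_comm, ← add_assoc, lie_jacobi]

omit [IsManifold I (⊤ : ℕ∞) M] in
lemma extD2_sub (β γ : VF → VF → Cinf) (X Y Z : VF) :
    extD2 (fun A B => β A B - γ A B) X Y Z = extD2 β X Y Z - extD2 γ X Y Z := by
  simp only [extD2, map_sub]
  abel

omit [IsManifold I (⊤ : ℕ∞) M] in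
lemma extD2_extD1 {F : Type*} [FunLike F VF Cinf] [AddMonoidHomClass F VF Cinf] (α : F)
    (X Y Z : VF) : extD2 (extD1 α) X Y Z = 0 := by
  have jacobi := congrArg α (lie_lie_cyclic_sum X Y Z)
  rw [map_add, map_add, map_zero] at jacobi
  rw [← jacobi]
  simp only [extD2, extD1, map_sub, Derivation.commutator_apply]
  abel

namespace LinearConnection

variable (nab : LinearConnection I M)

lemma cov_zero_left (Y : VF) : nab.cov 0 Y = 0 := by
  simpa using nab.smul_real_left 0 0 Y

lemma cov_sub_right (X Y Y' : VF) : nab.cov X (Y - Y') = nab.cov X Y - nab.cov X Y' := by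
  rw [show Y - Y' = Y + (-1 : ℝ) • Y' by module, nab.add_right, nab.smul_real_right]
  module

lemma cov_lie_lie_cyclic_sum (X Y Z W : VF) :
    nab.cov ⁅⁅X, Y⁆, Z⁆ W + nab.cov ⁅⁅Y, Z⁆, X⁆ W + nab.cov ⁅⁅Z, X⁆, Y⁆ W = 0 := by
  rw [← nab.add_left, ← nab.add_left, lie_lie_cyclic_sum, cov_zero_left]

/-- Second Bianchi identity in operator form; being the Jacobi identity for the operators `∇_X`,
it carries no torsion terms. -/
lemma cyclic_sum_cov_curv_sub_curv_cov (X Y Z W : VF) :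
    (nab.cov X (nab.curv Y Z W) - nab.curv Y Z (nab.cov X W))
      + (nab.cov Y (nab.curv Z X W) - nab.curv Z X (nab.cov Y W))
      + (nab.cov Z (nab.curv X Y W) - nab.curv X Y (nab.cov Z W)) =
      nab.curv ⁅X, Y⁆ Z W + nab.curv ⁅Y, Z⁆ X W + nab.curv ⁅Z, X⁆ Y W := by
  rw [← sub_eq_zero, ← nab.cov_lie_lie_cyclic_sum X Y Z W]
  simp only [curv, cov_sub_right]
  abel

def covDiff (W : VF) : VF →+ VF where
  toFun A := nab.cov A W
  map_zero' := nab.cov_zero_left W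
  map_add' A B := nab.add_left A B W

def psi (θ : VF → Cinf) (W A B : VF) : Cinf :=
  nab.covOne B θ (nab.cov A W) - nab.covOne A θ (nab.cov B W)

lemma psi_eq_curv_sub_extD1 {F : Type*} [FunLike F VF Cinf] [AddMonoidHomClass F VF Cinf]
    (θ : F) (W : VF) :
    nab.psi θ W = fun A B =>
      θ (nab.curv A B W) - extD1 ((θ : VF →+ Cinf).comp (nab.covDiff W)) A B := by
  funext A B
  simp only [psi, covOne, curv, extD1, map_sub, AddMonoidHom.coe_comp, AddMonoidHom.coe_coe,
    Function.comp_apply, covDiff, AddMonoidHom.coe_mk, ZeroHom.coe_mk]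
  abel

lemma extD2_curv {F : Type*} [FunLike F VF Cinf] [AddMonoidHomClass F VF Cinf]
    (θ : F) (W X Y Z : VF) :
    extD2 (fun A B => θ (nab.curv A B W)) X Y Z =
      (nab.covOne X θ (nab.curv Y Z W) + nab.covOne Y θ (nab.curv Z X W)
          + nab.covOne Z θ (nab.curv X Y W))
        + (θ (nab.curv Y Z (nab.cov X W)) + θ (nab.curv Z X (nab.cov Y W))
          + θ (nab.curv X Y (nab.cov Z W))) := by
  have bianchi := congrArg θ (nab.cyclic_sum_cov_curv_sub_curv_cov X Y Z W)
  simp only [map_add, map_sub] at bianchi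
  simp only [extD2, covOne]
  linear_combination bianchi

end LinearConnection

/-- `dΨ_{θ,W}(X,Y,Z) = Σ_cyc (∇_X θ)(R(Y,Z)W) + Σ_cyc θ(R(Y,Z)(∇_X W))`, where
`Ψ_{θ,W}(X,Y) := (∇_Y θ)(∇_X W) − (∇_X θ)(∇_Y W)`. -/
theorem extD_Psi_expansion (nab : LinearConnection I M)
    (θ : VF →ₗ[Cinf] Cinf) (W X Y Z : VF) :
    extD2 (fun A B => nab.covOne B (⇑θ) (nab.cov A W) - nab.covOne A (⇑θ) (nab.cov B W))
        X Y Z =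
      (nab.covOne X (⇑θ) (nab.curv Y Z W) + nab.covOne Y (⇑θ) (nab.curv Z X W)
          + nab.covOne Z (⇑θ) (nab.curv X Y W))
        + (θ (nab.curv Y Z (nab.cov X W)) + θ (nab.curv Z X (nab.cov Y W))
          + θ (nab.curv X Y (nab.cov Z W))) := by
  change extD2 (nab.psi θ W) X Y Z = _
  rw [nab.psi_eq_curv_sub_extD1, extD2_sub, extD2_extD1, sub_zero, nab.extD2_curv]
end
end

section
/- Cartan's first Bianchi identity: for each index a and all smooth vector fields X,Y,Z, dΘ^a(X,Y,Z) + Σ_b (ω^a_b ∧ Θ^b)(X,Y,Z) = Σ_b (Ω^a_b ∧ θ^b)(X,Y,Z). -/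
open scoped Manifold

local notation "∞" => (⊤ : ℕ∞)

noncomputable section

variable {E : Type*} [NormedAddCommGroup E] [NormedSpace ℝ E]
  {H : Type*} [TopologicalSpace H]

variable {I : ModelWithCorners ℝ E H}
  {M : Type*} [TopologicalSpace M] [ChartedSpace H M] [IsManifold I (⊤ : ℕ∞) M]

/-- Smooth real-valued functions on `M`. -/
local notation "Cinf" => C^∞⟮I, M; ℝ⟯
/-- Smooth global vector fields on `M`, as derivations of `C^∞(M)`. -/
local notation "VF" => Derivation ℝ C^∞⟮I, M; ℝ⟯ C^∞⟮I, M; ℝ⟯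

/-!
Expanding `W = Σ_b θ^b(W) U_b` and using the Leibniz rule gives
`Σ_b ω^a_b(V) θ^b(W) = θ^a(∇_V W) − V(θ^a(W))`, while tensoriality of `R` in its last slot gives
`Σ_b Ω^a_b(V,V') θ^b(W) = θ^a(R(V,V')W)`. The identity thus becomes `θ^a` applied to the
frame-free statement that the cyclic sum of `R(X,Y)Z` is the cyclic sum of
`∇_X(T(Y,Z)) − T([X,Y],Z)`; expanding `T` and `R`, the latter reduces to the Jacobi identity.
-/

section Frame

variable {R V ι : Type*} [CommRing R] [AddCommGroup V] [Module R V] [Fintype ι]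
  (U : ι → V) (θf : ι → V →ₗ[R] R)

theorem coframe_apply_sum_smul [DecidableEq ι]
    (hdual : ∀ a b, θf a (U b) = if a = b then 1 else 0) (f : ι → R) (a : ι) :
    θf a (∑ b, f b • U b) = f a := by
  simp [hdual]

theorem sum_coframe_apply_frame_mul_coframe (hframe : ∀ X : V, X = ∑ a, θf a X • U a)
    (L : V →ₗ[R] V) (a : ι) (W : V) :
    ∑ b, θf a (L (U b)) * θf b W = θf a (L W) := by
  conv_rhs => rw [hframe W]
  simp only [map_sum, map_smul, smul_eq_mul, mul_comm]

end Frame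

namespace LinearConnection

variable (nab : LinearConnection I M)

def covAddHom (X : VF) : VF →+ VF := AddMonoidHom.mk' (nab.cov X) (nab.add_right X)

def curvLinear (X Y : VF) : VF →ₗ[Cinf] VF where
  toFun := nab.curv X Y
  map_add' Z Z' := by
    simp only [curv, nab.add_right]
    abel
  map_smul' f Z := by
    simp only [curv, nab.leibniz, nab.add_right, Derivation.commutator_apply, smul_sub,
      RingHom.id_apply]
    module

theorem cyclic_curv_eq (X Y Z : VF) :
    nab.curv X Y Z + nab.curv Y Z X + nab.curv Z X Y
      = nab.cov X (nab.torsion Y Z) + nab.cov Y (nab.torsion Z X) + nab.cov Z (nab.torsion X Y)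
        - nab.torsion ⁅X, Y⁆ Z - nab.torsion ⁅Y, Z⁆ X - nab.torsion ⁅Z, X⁆ Y := by
  have hcov_sub (V W W' : VF) : nab.cov V (W - W') = nab.cov V W - nab.cov V W' :=
    map_sub (nab.covAddHom V) W W'
  have hlie_swap (A B C : VF) : ⁅⁅A, B⁆, C⁆ = -⁅C, ⁅A, B⁆⁆ := (lie_skew _ _).symm
  -- after expanding, everything cancels except the Jacobiator `[X,[Y,Z]] + [Y,[Z,X]] + [Z,[X,Y]]`
  have hexpand : nab.cov X (nab.torsion Y Z) + nab.cov Y (nab.torsion Z X)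
        + nab.cov Z (nab.torsion X Y)
        - nab.torsion ⁅X, Y⁆ Z - nab.torsion ⁅Y, Z⁆ X - nab.torsion ⁅Z, X⁆ Y
      = nab.curv X Y Z + nab.curv Y Z X + nab.curv Z X Y
        - (⁅X, ⁅Y, Z⁆⁆ + ⁅Y, ⁅Z, X⁆⁆ + ⁅Z, ⁅X, Y⁆⁆) := by
    simp only [torsion, curv, hcov_sub, hlie_swap]
    abel
  rw [hexpand, lie_jacobi, sub_zero]

theorem sum_coframe_cov_frame_mul_coframe {ι : Type*} [Fintype ι] [DecidableEq ι]
    (U : ι → VF) (θf : ι → (VF →ₗ[Cinf] Cinf))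
    (hdual : ∀ a b, θf a (U b) = if a = b then 1 else 0)
    (hframe : ∀ X : VF, X = ∑ a, θf a X • U a) (a : ι) (V W : VF) :
    ∑ b, θf a (nab.cov V (U b)) * θf b W = θf a (nab.cov V W) - V (θf a W) := by
  have hexpand : nab.cov V W = ∑ b, V (θf b W) • U b + ∑ b, θf b W • nab.cov V (U b) := by
    conv_lhs => rw [hframe W]
    rw [← Finset.sum_add_distrib]
    exact (map_sum (nab.covAddHom V) _ _).trans (Finset.sum_congr rfl fun b _ => nab.leibniz _ _ _)
  rw [hexpand, map_add, coframe_apply_sum_smul U θf hdual, map_sum]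
  simp only [map_smul, smul_eq_mul, mul_comm]
  ring

theorem sum_coframe_curv_frame_mul_coframe {ι : Type*} [Fintype ι]
    (U : ι → VF) (θf : ι → (VF →ₗ[Cinf] Cinf)) (hframe : ∀ X : VF, X = ∑ a, θf a X • U a)
    (a : ι) (X Y W : VF) :
    ∑ b, θf a (nab.curv X Y (U b)) * θf b W = θf a (nab.curv X Y W) :=
  sum_coframe_apply_frame_mul_coframe U θf hframe (nab.curvLinear X Y) a W

end LinearConnection

/-- **Cartan's first Bianchi identity.** For a frame `U_1,…,U_n` with dual coframe
`θ^1,…,θ^n`: `dΘ^a + Σ_b ω^a_b ∧ Θ^b = Σ_b Ω^a_b ∧ θ^b`, where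
`ω^a_b(X) := θ^a(∇_X U_b)`, `Θ^a(X,Y) := θ^a(T(X,Y))`, `Ω^a_b(X,Y) := θ^a(R(X,Y)U_b)`,
`(α ∧ β)(X,Y,Z) := α(X)β(Y,Z) + α(Y)β(Z,X) + α(Z)β(X,Y)` for a 1-form `α` and 2-form `β`,
and `(β ∧ α)(X,Y,Z) := β(X,Y)α(Z) + β(Y,Z)α(X) + β(Z,X)α(Y)`. -/
theorem cartan_first_bianchi (nab : LinearConnection I M) {n : ℕ}
    (U : Fin n → VF) (θf : Fin n → (VF →ₗ[Cinf] Cinf))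
    (hdual : ∀ a b, θf a (U b) = if a = b then 1 else 0)
    (hframe : ∀ X : VF, X = ∑ a, θf a X • U a)
    (a : Fin n) (X Y Z : VF) :
    extD2 (fun A B => θf a (nab.torsion A B)) X Y Z
      + ∑ b, (θf a (nab.cov X (U b)) * θf b (nab.torsion Y Z)
          + θf a (nab.cov Y (U b)) * θf b (nab.torsion Z X)
          + θf a (nab.cov Z (U b)) * θf b (nab.torsion X Y)) =
    ∑ b, (θf a (nab.curv X Y (U b)) * θf b Z
        + θf a (nab.curv Y Z (U b)) * θf b X
        + θf a (nab.curv Z X (U b)) * θf b Y) := by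
  have hbianchi := congrArg (θf a) (nab.cyclic_curv_eq X Y Z)
  simp only [map_add, map_sub] at hbianchi
  simp only [extD2, Finset.sum_add_distrib,
    nab.sum_coframe_cov_frame_mul_coframe U θf hdual hframe,
    nab.sum_coframe_curv_frame_mul_coframe U θf hframe]
  linear_combination -hbianchi
end
end
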